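/- For the Lie algebra Φ'_{1,t} (brackets [e₁,e₄]=[e₂,e₃]=-e₁, [e₂,e₄]=(t-1/2)e₂, [e₃,e₄]=-(t+1/2)e₃), the element e₄ is a principal element for the Frobenius functional F=e₁*: namely F([e₄,x])=F(x) for all x, and the eigenvalues of ad(e₄) are exactly {0, 1/2 - t, 1/2 + t, 1}. -/
import Mathlib


noncomputable section

/-- The deformed bracket of `Φ′_{1,t}` on `Fin 4 → ℂ`, basis `e₁,…,e₄` indexed `0,…,3`. -/
def brPhi1t (t : ℂ) (x y : Fin 4 → ℂ) : Fin 4 → ℂ :=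
  ![ -(x 0 * y 3 - x 3 * y 0) - (x 1 * y 2 - x 2 * y 1),
     (t - 1/2) * (x 1 * y 3 - x 3 * y 1),
     -(t + 1/2) * (x 2 * y 3 - x 3 * y 2),
     0 ]

/-- In `Φ′_{1,t}`, the element `e₄` is a principal element for the Frobenius
functional `F = e₁*`: `F [e₄, x] = F x` for all `x`, and the eigenvalues of
`ad e₄` are exactly `{0, 1/2 - t, 1/2 + t, 1}`. -/
theorem phi1t_principal_and_spectrum (t : ℂ) :
    (∀ x : Fin 4 → ℂ, brPhi1t t (Pi.single 3 1) x 0 = x 0) ∧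
    ∃ M : Matrix (Fin 4) (Fin 4) ℂ,
      (∀ x : Fin 4 → ℂ, M.mulVec x = brPhi1t t (Pi.single 3 1) x) ∧
      ∀ μ : ℂ, Module.End.HasEigenvalue (Matrix.toLin' M) μ ↔
        μ ∈ ({0, 1/2 - t, 1/2 + t, 1} : Set ℂ) := by
  have hsingle : (Pi.single 3 1 : Fin 4 → ℂ) = ![0, 0, 0, 1] := by
    ext i; fin_cases i <;> simp [Pi.single_apply]
  constructor
  · intro x
    simp [brPhi1t, hsingle]
  · refine ⟨Matrix.diagonal ![1, 1/2 - t, 1/2 + t, 0], ?_, ?_⟩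
    · intro x
      ext i
      fin_cases i <;>
        simp [brPhi1t, hsingle, Matrix.mulVec, dotProduct, Fin.sum_univ_four,
          Matrix.diagonal] <;> ring
    · intro μ
      rw [hasEigenvalue_toLin'_diagonal_iff]
      constructor
      · rintro ⟨i, rfl⟩
        fin_cases i <;> simp [Set.mem_insert_iff]
      · rintro (rfl | rfl | rfl | rfl)
        · exact ⟨3, rfl⟩
        · exact ⟨1, rfl⟩
        · exact ⟨2, rfl⟩
        · exact ⟨0, rfl⟩
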